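/- For every j ∉ {1, i} and every integer r ≥ 2, one has P(F^{r,1}_{1,j} \ C_a) ≥ P(F^{1,r}_{1,j} \ C_a). -/

import Mathlib

open MeasureTheory ProbabilityTheory ENNReal

namespace BallsBins

variable {k : ℕ}

/-- Number of times bin `j` is selected during the first `t` rounds of `ω`. -/
def numSel (ω : ℕ → Fin k) (j : Fin k) (t : ℕ) : ℕ :=
  ((Finset.range t).filter (fun s => ω s = j)).card

/-- Content (possibly negative) of bin `j` at the end of round `t`, started from `n`. -/
def content (n : Fin k → ℕ) (ω : ℕ → Fin k) (j : Fin k) (t : ℕ) : ℤ :=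
  (n j : ℤ) - numSel ω j t

/-- The set of non-empty bins at the end of round `t`. -/
def nonemptyBins (n : Fin k → ℕ) (ω : ℕ → Fin k) (t : ℕ) : Finset (Fin k) :=
  Finset.univ.filter (fun j => 0 < content n ω j t)

/-- `T n ω` : the first round at which a unique non-empty bin remains (`⊤` if never). -/
noncomputable def T (n : Fin k → ℕ) (ω : ℕ → Fin k) : ℕ∞ :=
  sInf ((fun t : ℕ => (t : ℕ∞)) '' {t | (nonemptyBins n ω t).card = 1})

/-- `X n ω` : the number of balls remaining when the process stops, i.e. at round `T n ω`. -/
noncomputable def X (n : Fin k → ℕ) (ω : ℕ → Fin k) : ℕ :=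
  ∑ j, (n j - numSel ω j (T n ω).toNat)

/-- Condition (a): bin `b1` contains exactly one ball more than bin `i` at the end of round `t`. -/
def condA (n : Fin k → ℕ) (b1 i : Fin k) (ω : ℕ → Fin k) (t : ℕ) : Prop :=
  content n ω b1 t = content n ω i t + 1

/-- Condition (b): at the end of round `t` there are exactly two non-empty bins and one of
them contains exactly one ball. -/
def condB (n : Fin k → ℕ) (ω : ℕ → Fin k) (t : ℕ) : Prop :=
  (nonemptyBins n ω t).card = 2 ∧ ∃ j, content n ω j t = 1

/-- `S n b1 i ω` : the first round at the end of which condition (a) or (b) occurs. -/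
noncomputable def S (n : Fin k → ℕ) (b1 i : Fin k) (ω : ℕ → Fin k) : ℕ∞ :=
  sInf ((fun t : ℕ => (t : ℕ∞)) '' {t | condA n b1 i ω t ∨ condB n ω t})

/-- `Ca n b1 i` : the event that condition (a) occurs at round `S n b1 i`. -/
def Ca (n : Fin k → ℕ) (b1 i : Fin k) : Set (ℕ → Fin k) :=
  {ω | ∃ t : ℕ, S n b1 i ω = (t : ℕ∞) ∧ condA n b1 i ω t}

/-- The event that bins `p` and `q` are the last two non-empty bins. -/
def lastTwo (n : Fin k → ℕ) (p q : Fin k) : Set (ℕ → Fin k) :=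
  {ω | ∃ t : ℕ, nonemptyBins n ω t = {p, q}}

/-- The first round at which condition (b) is triggered (`⊤` if never). -/
noncomputable def TB (n : Fin k → ℕ) (ω : ℕ → Fin k) : ℕ∞ :=
  sInf ((fun t : ℕ => (t : ℕ∞)) '' {t | condB n ω t})

/-- `Fab n b1 j a b` : the event that bins `b1` and `j` are the last two non-empty bins and,
at the first round at which condition (b) is triggered, bins `b1` and `j` contain `a` and `b`
balls respectively. -/
def Fab (n : Fin k → ℕ) (b1 j : Fin k) (a b : ℕ) : Set (ℕ → Fin k) :=
  lastTwo n b1 j ∩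
    {ω | ∃ t : ℕ, TB n ω = (t : ℕ∞) ∧ content n ω b1 t = (a : ℤ) ∧ content n ω j t = (b : ℤ)}

/-- The assignment `n - e_{b1} + e_i`. -/
def shift (n : Fin k → ℕ) (b1 i : Fin k) : Fin k → ℕ :=
  Function.update (Function.update n b1 (n b1 - 1)) i (n i + 1)

/-- The uniform probability measure on `Fin k`. -/
noncomputable def unifFin (k : ℕ) : Measure (Fin k) := (k : ℝ≥0∞)⁻¹ • Measure.count

/-- `IsIIDUniform μ` : `μ` is a probability measure on `[k]^ℕ` under which the coordinates
are independent and each is uniformly distributed on `Fin k`; this uniquely characterizes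
the product of uniform measures. -/
structure IsIIDUniform (μ : Measure (ℕ → Fin k)) : Prop where
  prob : IsProbabilityMeasure μ
  indep : iIndepFun (fun (t : ℕ) (ω : ℕ → Fin k) => ω t) μ
  unif : ∀ t : ℕ, μ.map (fun ω : ℕ → Fin k => ω t) = unifFin k

/-! A reflection argument. For `ω ∈ F^{1,r} \ C_a`, let `t` be the round at which condition (b)
is first met and `s` the last round before `t` at which bins `1` and `j` hold equally many balls;
it exists because bin `1` starts at least level with bin `j` and ends behind it. Exchanging the
labels `1` and `j` in the rounds `s, …, t - 1` preserves the i.i.d. uniform law, does not change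
when condition (b) holds, and turns the final contents `(1, r)` into `(r, 1)`. Condition (a) stays
absent: up to round `t` bin `1` is more than one ball ahead of bin `i` (it starts ahead and is
never exactly one ahead), and after round `s` bin `j` is ahead of bin `1`. As `(s, t)` is
determined by `ω`, summing over `(s, t)` gives the inequality. -/

theorem exists_eq_of_abs_sub_le_one {f : ℕ → ℤ} (hf : ∀ u, |f (u + 1) - f u| ≤ 1) {c : ℤ}
    {a b : ℕ} (hab : a ≤ b) (ha : c ≤ f a) (hb : f b < c) : ∃ v, a ≤ v ∧ v < b ∧ f v = c := by
  induction b, hab using Nat.le_induction with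
  | base => omega
  | succ b hab ih =>
    by_cases hfb : f b < c
    · obtain ⟨v, hav, hvb, hv⟩ := ih hfb
      exact ⟨v, hav, by omega, hv⟩
    · have := abs_le.1 (hf b)
      exact ⟨b, hab, by omega, by omega⟩

theorem sInf_natCast_image_eq_natCast_iff {M : Set ℕ} {t : ℕ} :
    sInf ((↑) '' M : Set ℕ∞) = t ↔ IsLeast M t := by
  refine ⟨fun h => ?_, fun h => (Nat.mono_cast.map_isLeast h).csInf_eq⟩
  have hM : M.Nonempty := by
    by_contra hM
    simp [Set.not_nonempty_iff_eq_empty.1 hM] at h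
  have hmem := csInf_mem (hM.image ((↑) : ℕ → ℕ∞))
  rw [h] at hmem
  obtain ⟨u, hu, hut⟩ := hmem
  obtain rfl : u = t := by exact_mod_cast hut
  exact ⟨hu, fun v hv => by exact_mod_cast h ▸ sInf_le (Set.mem_image_of_mem _ hv)⟩

theorem TB_eq_iff {n : Fin k → ℕ} {ω : ℕ → Fin k} {t : ℕ} :
    TB n ω = t ↔ IsLeast {u | condB n ω u} t :=
  sInf_natCast_image_eq_natCast_iff

theorem S_eq_iff {n : Fin k → ℕ} {b1 i : Fin k} {ω : ℕ → Fin k} {t : ℕ} :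
    S n b1 i ω = t ↔ IsLeast {u | condA n b1 i ω u ∨ condB n ω u} t :=
  sInf_natCast_image_eq_natCast_iff

theorem content_zero (n : Fin k → ℕ) (ω : ℕ → Fin k) (m : Fin k) : content n ω m 0 = n m := by
  simp [content, numSel]

theorem content_succ (n : Fin k → ℕ) (ω : ℕ → Fin k) (m : Fin k) (u : ℕ) :
    content n ω m (u + 1) = content n ω m u - if ω u = m then 1 else 0 := by
  simp only [content, numSel, Finset.range_add_one, Finset.filter_insert]
  split_ifs with h
  · rw [Finset.card_insert_of_notMem (by simp)]
    push_cast
    ring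
  · simp

theorem abs_content_sub_content_succ_le (n : Fin k → ℕ) (ω : ℕ → Fin k) (p q : Fin k) (u : ℕ) :
    |content n ω p (u + 1) - content n ω q (u + 1) - (content n ω p u - content n ω q u)| ≤ 1 := by
  rw [content_succ, content_succ, abs_le]
  split_ifs <;> omega

theorem content_congr {n : Fin k → ℕ} {ω ω' : ℕ → Fin k} {u : ℕ} (h : ∀ v < u, ω v = ω' v)
    (m : Fin k) : content n ω m u = content n ω' m u := by
  unfold content numSel
  congr 3
  exact Finset.filter_congr fun v hv => by rw [h v (Finset.mem_range.1 hv)]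

theorem condB_iff_of_content_eq_comp_perm {n : Fin k → ℕ} {ω ω' : ℕ → Fin k} {u : ℕ}
    (σ : Equiv.Perm (Fin k)) (h : ∀ m, content n ω' m u = content n ω (σ m) u) :
    condB n ω' u ↔ condB n ω u := by
  have hcard : (nonemptyBins n ω' u).card = (nonemptyBins n ω u).card := by
    simp only [nonemptyBins, Finset.card_filter, h]
    exact Equiv.sum_comp σ fun m => if 0 < content n ω m u then 1 else 0
  simp only [condB, hcard, h]
  exact and_congr_right' ⟨fun ⟨m, hm⟩ => ⟨σ m, hm⟩, fun ⟨m, hm⟩ => ⟨σ.symm m, by simpa⟩⟩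

theorem unifFin_map_perm (e : Equiv.Perm (Fin k)) : (unifFin k).map e = unifFin k := by
  ext s hs
  rw [Measure.map_apply (measurable_of_finite e) hs, ← Equiv.image_symm_eq_preimage]
  simp only [unifFin, Measure.smul_apply, smul_eq_mul]
  rw [Measure.count_injective_image e.symm.injective]

theorem IsIIDUniform.map_perm_apply {μ : Measure (ℕ → Fin k)} (hμ : IsIIDUniform μ)
    (e : ℕ → Equiv.Perm (Fin k)) : μ.map (fun ω u => e u (ω u)) = μ := by
  have := hμ.prob
  have hν (u : ℕ) : IsProbabilityMeasure (μ.map fun ω => ω u) :=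
    Measure.isProbabilityMeasure_map (measurable_pi_apply u).aemeasurable
  have hpi : μ = Measure.infinitePi fun u => μ.map fun ω => ω u := by
    simpa using hμ.indep.map_fun_eq_infinitePi_map fun u => measurable_pi_apply u
  calc μ.map (fun ω u => e u (ω u))
      = (Measure.infinitePi fun u => μ.map fun ω => ω u).map (fun ω u => e u (ω u)) := by
        rw [← hpi]
    _ = Measure.infinitePi fun u => (μ.map fun ω => ω u).map (e u) :=
        Measure.infinitePi_map_pi _ fun u => measurable_of_finite (e u)
    _ = μ := by
        conv_rhs => rw [hpi]
        simp_rw [hμ.unif, unifFin_map_perm]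

def swapOn (p q : Fin k) (s t : ℕ) (ω : ℕ → Fin k) : ℕ → Fin k :=
  fun u => (if s ≤ u ∧ u < t then Equiv.swap p q else Equiv.refl _) (ω u)

theorem swapOn_swapOn (p q : Fin k) (s t : ℕ) (ω : ℕ → Fin k) :
    swapOn p q s t (swapOn p q s t ω) = ω := by
  funext u
  unfold swapOn
  split_ifs <;> simp

theorem measurable_swapOn (p q : Fin k) (s t : ℕ) : Measurable (swapOn p q s t) :=
  measurable_pi_lambda _ fun u => (measurable_of_finite _).comp (measurable_pi_apply u)

theorem IsIIDUniform.map_swapOn {μ : Measure (ℕ → Fin k)} (hμ : IsIIDUniform μ)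
    (p q : Fin k) (s t : ℕ) : μ.map (swapOn p q s t) = μ :=
  hμ.map_perm_apply _

theorem content_swapOn_of_le (n : Fin k → ℕ) (ω : ℕ → Fin k) {p q : Fin k} {s t u : ℕ}
    (hu : u ≤ s) (m : Fin k) : content n (swapOn p q s t ω) m u = content n ω m u :=
  content_congr (fun v hv => by simp [swapOn, show ¬s ≤ v by omega]) m

theorem content_swapOn_of_tie (n : Fin k → ℕ) (ω : ℕ → Fin k) {p q : Fin k} {s t u : ℕ}
    (htie : content n ω p s = content n ω q s) (hsu : s ≤ u) (hut : u ≤ t) (m : Fin k) :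
    content n (swapOn p q s t ω) m u = content n ω (Equiv.swap p q m) u := by
  induction u, hsu using Nat.le_induction generalizing m with
  | base =>
    rw [content_swapOn_of_le n ω le_rfl]
    rcases eq_or_ne m p with rfl | hp
    · simpa using htie
    rcases eq_or_ne m q with rfl | hq
    · simpa using htie.symm
    · rw [Equiv.swap_apply_of_ne_of_ne hp hq]
  | succ u hsu ih =>
    rw [content_succ, content_succ, ih (by omega)]
    simp [swapOn, hsu, show u < t by omega, Equiv.swap_apply_eq_iff]

theorem measurable_content_pred (n : Fin k → ℕ) (u : ℕ) (P : (Fin k → ℤ) → Prop) :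
    Measurable fun ω : ℕ → Fin k => P fun m => content n ω m u := by
  refine Measurable.of_discrete.comp (measurable_pi_lambda _ fun m => ?_)
  induction u with
  | zero => simp only [content_zero, measurable_const]
  | succ u ih =>
    simp only [content_succ]
    exact ih.sub ((measurable_of_finite fun x : Fin k => if x = m then (1 : ℤ) else 0).comp
      (measurable_pi_apply u))

def lastTieEvent (n : Fin k → ℕ) (b1 i j : Fin k) (a b s t : ℕ) : Set (ℕ → Fin k) :=
  {ω | s < t ∧ condB n ω t ∧ (∀ u < t, ¬condB n ω u) ∧
    content n ω b1 t = a ∧ content n ω j t = b ∧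
    content n ω b1 s = content n ω j s ∧
    (∀ u, s < u → u < t → content n ω b1 u ≠ content n ω j u) ∧
    (∀ u ≤ t, ¬condA n b1 i ω u)}

theorem measurableSet_lastTieEvent (n : Fin k → ℕ) (b1 i j : Fin k) (a b s t : ℕ) :
    MeasurableSet (lastTieEvent n b1 i j a b s t) := by
  have hB (u : ℕ) : Measurable fun ω => condB n ω u := measurable_content_pred n u
    fun c => (Finset.univ.filter fun m => 0 < c m).card = 2 ∧ ∃ m, c m = 1
  have hA (u : ℕ) : Measurable fun ω => condA n b1 i ω u :=
    measurable_content_pred n u fun c => c b1 = c i + 1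
  have hC (u : ℕ) (x : Fin k) (z : ℤ) : Measurable fun ω => content n ω x u = z :=
    measurable_content_pred n u fun c => c x = z
  have hE (u : ℕ) : Measurable fun ω => content n ω b1 u = content n ω j u :=
    measurable_content_pred n u fun c => c b1 = c j
  exact measurableSet_setOfPred.2 (by fun_prop)

theorem not_condA_of_notMem_Ca {n : Fin k → ℕ} {b1 i : Fin k} {ω : ℕ → Fin k} {t : ℕ}
    (hω : ω ∉ Ca n b1 i) (ht : IsLeast {u | condB n ω u} t) : ∀ u ≤ t, ¬condA n b1 i ω u := by
  classical
  intro u hut hu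
  have hex : ∃ u, condA n b1 i ω u := ⟨u, hu⟩
  have hfirst : IsLeast {u | condA n b1 i ω u ∨ condB n ω u} (Nat.find hex) :=
    ⟨Or.inl (Nat.find_spec hex), fun v hv => not_lt.1 fun hlt => hv.elim (Nat.find_min hex hlt)
      fun hB => (ht.2 hB).not_gt (hlt.trans_le ((Nat.find_min' hex hu).trans hut))⟩
  exact hω ⟨_, S_eq_iff.2 hfirst, Nat.find_spec hex⟩

theorem lastTieEvent_subset {n : Fin k → ℕ} {b1 i j : Fin k} {a b s t : ℕ} (ha : 1 ≤ a)
    (hb : 1 ≤ b) (hb1j : b1 ≠ j) : lastTieEvent n b1 i j a b s t ⊆ Fab n b1 j a b \ Ca n b1 i := by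
  rintro ω ⟨-, hBt, hmin, ha', hb', -, -, hnA⟩
  have hbins : nonemptyBins n ω t = {b1, j} := by
    refine (Finset.eq_of_subset_of_card_le (fun m hm => ?_) ?_).symm
    · simp only [Finset.mem_insert, Finset.mem_singleton] at hm
      rcases hm with rfl | rfl <;> simp [nonemptyBins, ha', hb'] <;> omega
    · rw [hBt.1, Finset.card_pair hb1j]
  have hfirst : IsLeast {u | condB n ω u} t := ⟨hBt, fun u hu => not_lt.1 fun h => hmin u h hu⟩
  refine ⟨⟨⟨t, hbins⟩, t, TB_eq_iff.2 hfirst, ha', hb'⟩, fun ⟨t', hS, hA⟩ => ?_⟩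
  have hS' : IsLeast {u | condA n b1 i ω u ∨ condB n ω u} t :=
    ⟨Or.inr hBt, fun u hu => not_lt.1 fun h => hu.elim (hnA u h.le) (hmin u h)⟩
  obtain rfl := (S_eq_iff.1 hS).unique hS'
  exact hnA t' le_rfl hA

theorem pairwise_disjoint_lastTieEvent (n : Fin k → ℕ) (b1 i j : Fin k) (a b : ℕ) :
    Pairwise (Function.onFun Disjoint fun st : ℕ × ℕ => lastTieEvent n b1 i j a b st.1 st.2) := by
  rintro ⟨s, t⟩ ⟨s', t'⟩ hne
  refine Set.disjoint_left.2 fun ω hω hω' => hne ?_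
  obtain ⟨hst, hBt, hmin, -, -, htie, hnotie, -⟩ := hω
  obtain ⟨hst', hBt', hmin', -, -, htie', hnotie', -⟩ := hω'
  obtain rfl : t = t' := by
    by_contra h
    rcases Nat.lt_or_gt_of_ne h with h | h
    · exact hmin' t h hBt
    · exact hmin t' h hBt'
  obtain rfl : s = s' := by
    by_contra h
    rcases Nat.lt_or_gt_of_ne h with h | h
    · exact hnotie s' h hst' htie'
    · exact hnotie' s h hst htie
  rfl

theorem diff_Ca_subset_iUnion_lastTieEvent {n : Fin k → ℕ} {b1 i j : Fin k} {a b : ℕ}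
    (hnj : n j ≤ n b1) (hab : a < b) :
    Fab n b1 j a b \ Ca n b1 i ⊆ ⋃ st : ℕ × ℕ, lastTieEvent n b1 i j a b st.1 st.2 := by
  rintro ω ⟨⟨-, t, hTB, ha, hb⟩, hnCa⟩
  have ht := TB_eq_iff.1 hTB
  have h0 : 0 ≤ content n ω b1 0 - content n ω j 0 := by
    rw [content_zero, content_zero]
    omega
  obtain ⟨v, -, hvt, hv⟩ := exists_eq_of_abs_sub_le_one
    (f := fun u => content n ω b1 u - content n ω j u) (abs_content_sub_content_succ_le n ω b1 j)
    (Nat.zero_le t) h0 (by rw [ha, hb]; omega)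
  let s := Nat.findGreatest (fun u => content n ω b1 u = content n ω j u) t
  have htie : content n ω b1 s = content n ω j s :=
    Nat.findGreatest_spec (P := fun u => content n ω b1 u = content n ω j u) hvt.le
      (sub_eq_zero.1 hv)
  have hst : s < t := (Nat.findGreatest_le t).lt_of_ne fun h : s = t => by
    rw [h, ha, hb] at htie
    omega
  refine Set.mem_iUnion.2 ⟨(s, t), hst, ht.1, fun u hu hB => (ht.2 hB).not_gt hu, ha, hb, htie,
    fun u hsu hut => Nat.findGreatest_is_greatest hsu hut.le, not_condA_of_notMem_Ca hnCa ht⟩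

theorem mapsTo_swapOn_lastTieEvent {n : Fin k → ℕ} {b1 i j : Fin k} {a b : ℕ}
    (hi : n i < n b1) (hij : i ≠ j) (hab : a < b) (s t : ℕ) :
    Set.MapsTo (swapOn b1 j s t) (lastTieEvent n b1 i j a b s t)
      (lastTieEvent n b1 i j b a s t) := by
  intro ω hω
  obtain ⟨hst, hBt, hmin, ha, hb, htie, hnotie, hnA⟩ := hω
  have hlow {u} (hu : u ≤ s) := content_swapOn_of_le n ω (p := b1) (q := j) (t := t) hu
  have hmid {u} (hsu : s ≤ u) (hut : u ≤ t) := content_swapOn_of_tie n ω htie hsu hut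
  have hB {u} (hut : u ≤ t) : condB n (swapOn b1 j s t ω) u ↔ condB n ω u := by
    rcases le_total u s with hus | hsu
    · exact condB_iff_of_content_eq_comp_perm (Equiv.refl _) (hlow hus)
    · exact condB_iff_of_content_eq_comp_perm _ (hmid hsu hut)
  have hjb1 {u} (hsu : s < u) (hut : u ≤ t) : content n ω b1 u < content n ω j u := by
    by_contra! h
    obtain ⟨v, huv, hvt, hv⟩ := exists_eq_of_abs_sub_le_one
      (f := fun u => content n ω b1 u - content n ω j u) (abs_content_sub_content_succ_le n ω b1 j)
      hut (sub_nonneg.2 h) (by rw [ha, hb]; omega)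
    exact hnotie v (by omega) hvt (sub_eq_zero.1 hv)
  refine ⟨hst, (hB le_rfl).2 hBt, fun u hu hB' => hmin u hu ((hB hu.le).1 hB'), ?_, ?_, ?_, ?_, ?_⟩
  · simpa [hmid hst.le le_rfl] using hb
  · simpa [hmid hst.le le_rfl] using ha
  · simpa [hlow le_rfl] using htie
  · intro u hsu hut
    simpa [hmid hsu.le hut.le] using (hnotie u hsu hut).symm
  intro u hut hA
  rcases le_or_gt u s with hus | hsu
  · exact hnA u hut (by simpa [condA, hlow hus] using hA)
  -- bin `j` is ahead of bin `b1` after the last tie, so `b1` would have passed `i + 1` earlier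
  have hlt : content n ω b1 u - content n ω i u < 1 := by
    have := hjb1 hsu hut
    simp only [condA, hmid hsu.le hut, Equiv.swap_apply_left,
      Equiv.swap_apply_of_ne_of_ne (show i ≠ b1 by rintro rfl; omega) hij] at hA
    omega
  have h0 : 1 ≤ content n ω b1 0 - content n ω i 0 := by
    rw [content_zero, content_zero]
    omega
  obtain ⟨v, -, hvu, hv⟩ := exists_eq_of_abs_sub_le_one
    (f := fun u => content n ω b1 u - content n ω i u) (abs_content_sub_content_succ_le n ω b1 i)
    (Nat.zero_le u) h0 hlt
  exact hnA v (by omega) (by unfold condA; omega)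

theorem measure_lastTieEvent_le {μ : Measure (ℕ → Fin k)} (hμ : IsIIDUniform μ)
    {n : Fin k → ℕ} {b1 i j : Fin k} {a b : ℕ} (hi : n i < n b1) (hij : i ≠ j) (hab : a < b)
    (s t : ℕ) : μ (lastTieEvent n b1 i j a b s t) ≤ μ (lastTieEvent n b1 i j b a s t) := by
  conv_lhs => rw [← hμ.map_swapOn b1 j s t,
    Measure.map_apply (measurable_swapOn b1 j s t) (measurableSet_lastTieEvent ..)]
  refine measure_mono fun ω hω => ?_
  simpa [swapOn_swapOn] using mapsTo_swapOn_lastTieEvent hi hij hab s t hω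

theorem measure_Fab_diff_Ca_le {μ : Measure (ℕ → Fin k)} (hμ : IsIIDUniform μ)
    {n : Fin k → ℕ} {b1 i j : Fin k} (hnj : n j ≤ n b1) (hi : n i < n b1) (hb1j : b1 ≠ j)
    (hij : i ≠ j) {a b : ℕ} (ha : 1 ≤ a) (hab : a < b) :
    μ (Fab n b1 j a b \ Ca n b1 i) ≤ μ (Fab n b1 j b a \ Ca n b1 i) :=
  calc μ (Fab n b1 j a b \ Ca n b1 i)
      ≤ μ (⋃ st : ℕ × ℕ, lastTieEvent n b1 i j a b st.1 st.2) :=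
        measure_mono (μ := μ) (diff_Ca_subset_iUnion_lastTieEvent hnj hab)
    _ ≤ ∑' st : ℕ × ℕ, μ (lastTieEvent n b1 i j a b st.1 st.2) := measure_iUnion_le _
    _ ≤ ∑' st : ℕ × ℕ, μ (lastTieEvent n b1 i j b a st.1 st.2) :=
        ENNReal.tsum_le_tsum fun st => measure_lastTieEvent_le hμ hi hij hab st.1 st.2
    _ = μ (⋃ st : ℕ × ℕ, lastTieEvent n b1 i j b a st.1 st.2) :=
        (measure_iUnion (pairwise_disjoint_lastTieEvent ..)
          fun st => measurableSet_lastTieEvent ..).symm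
    _ ≤ μ (Fab n b1 j b a \ Ca n b1 i) :=
        measure_mono (μ := μ) (Set.iUnion_subset fun st => lastTieEvent_subset (by omega) ha hb1j)

/-- For every `j ∉ {1, i}` and every integer `r ≥ 2`,
`P(F^{r,1}_{1,j} \ Ca) ≥ P(F^{1,r}_{1,j} \ Ca)`. -/
theorem prob_Fr1_diff_Ca_ge
    {k : ℕ} (n : Fin k → ℕ) (b1 : Fin k)
    (i : Fin k) (hmax : ∀ j : Fin k, n j ≤ n b1) (hi : n i + 2 ≤ n b1)
    (μ : Measure (ℕ → Fin k)) (hμ : IsIIDUniform μ)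
    (j : Fin k) (hj : j ∉ ({b1, i} : Set (Fin k))) (r : ℕ) (hr : 2 ≤ r) :
    μ (Fab n b1 j 1 r \ Ca n b1 i) ≤ μ (Fab n b1 j r 1 \ Ca n b1 i) := by
  simp only [Set.mem_insert_iff, Set.mem_singleton_iff, not_or] at hj
  exact measure_Fab_diff_Ca_le hμ (hmax j) (by omega) (Ne.symm hj.1) (Ne.symm hj.2) le_rfl
    (by omega)

end BallsBins
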